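/- arXiv:0810.1240 — 3 statements merged into one kernel-verified Lean document; each statement's English description precedes it below -/
import Mathlib

section
/- For a pure state |ψ⟩ of two qubits (unit vector in ℂ²⊗ℂ²), the one-tangle of the reduced density matrix equals the squared concurrence: 4 det(Tr_B |ψ⟩⟨ψ|) = |⟨ψ*| σ^y ⊗ σ^y |ψ⟩|², where |ψ*⟩ denotes the componentwise complex conjugate of |ψ⟩ in the standard basis. -/
/-! Both sides only depend on `det M`: the reduced state has determinant
`det M * conj (det M) = |det M|²`, and contracting `M ⊗ M` against the antisymmetric
`σʸ ⊗ σʸ` gives `-2 (M₀₀ M₁₁ - M₀₁ M₁₀) = -2 det M`. -/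

open Matrix

/-- The Pauli matrix `σʸ`. -/
def pauliY : Matrix (Fin 2) (Fin 2) ℂ := !![0, -Complex.I; Complex.I, 0]

theorem Matrix.det_mul_conjTranspose_self {n : Type*} [Fintype n] [DecidableEq n]
    (M : Matrix n n ℂ) : (M * Mᴴ).det = Complex.normSq M.det := by
  rw [det_mul, det_conjTranspose, ← Complex.mul_conj]
  rfl

theorem sum_mul_pauliY_mul_pauliY_mul_eq (M : Matrix (Fin 2) (Fin 2) ℂ) :
    ∑ k, ∑ l, ∑ i, ∑ j, M k l * pauliY k i * pauliY l j * M i j = -2 * M.det := by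
  simp only [pauliY, Fin.sum_univ_two, det_fin_two, of_apply, cons_val', cons_val_zero,
    cons_val_one, empty_val', cons_val_fin_one]
  ring_nf
  rw [Complex.I_sq]
  ring

/-- Here `M` is the coefficient matrix of `|ψ⟩`, so that `Tr_B |ψ⟩⟨ψ| = M * Mᴴ` and
`⟨ψ*| σʸ⊗σʸ |ψ⟩ = ∑ M k l * σʸ k i * σʸ l j * M i j`. -/
theorem one_tangle_eq_concurrence_sq_general (M : Matrix (Fin 2) (Fin 2) ℂ) :
    4 * (M * Mᴴ).det =
      ((‖(∑ k, ∑ l, ∑ i, ∑ j,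
          M k l * pauliY k i * pauliY l j * M i j)‖) ^ 2 : ℝ) := by
  rw [sum_mul_pauliY_mul_pauliY_mul_eq, det_mul_conjTranspose_self, Complex.sq_norm,
    Complex.normSq_mul]
  norm_num [Complex.normSq]

/-- For a pure state `|ψ⟩` of two qubits, represented by its coefficient matrix
`M : Matrix (Fin 2) (Fin 2) ℂ` in the standard product basis (a unit vector), the
one-tangle of the reduced density matrix equals the squared concurrence:
`4 det (Tr_B |ψ⟩⟨ψ|) = |⟨ψ*| σʸ ⊗ σʸ |ψ⟩|²`, where
`⟨ψ*| σʸ⊗σʸ |ψ⟩ = ∑ M k l * σʸ k i * σʸ l j * M i j`. -/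
theorem one_tangle_eq_concurrence_sq (M : Matrix (Fin 2) (Fin 2) ℂ)
    (hunit : ∑ i, ∑ j, Complex.normSq (M i j) = 1) :
    4 * (M * Mᴴ).det =
      ((‖(∑ k, ∑ l, ∑ i, ∑ j,
          M k l * pauliY k i * pauliY l j * M i j)‖) ^ 2 : ℝ) :=
  one_tangle_eq_concurrence_sq_general M
end

section
/- For a two-qubit density matrix of the form ρ = [[a,0,0,c],[0,x,z,0],[0,z*,y,0],[0,c*,0,b]] (in the basis |00⟩,|01⟩,|10⟩,|11⟩) with a,b,x,y ≥ 0 real and c,z complex, the Wootters concurrence equals C = 2 max{0, |c| − √(xy), |z| − √(ab)}. -/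
open Matrix Polynomial

/-- The X-form two-qubit density matrix in the ordered basis `|00⟩,|01⟩,|10⟩,|11⟩`. -/
def Xrho (a b x y : ℝ) (c z : ℂ) : Matrix (Fin 4) (Fin 4) ℂ :=
  !![(a : ℂ), 0, 0, c;
     0, (x : ℂ), z, 0;
     0, (starRingEnd ℂ) z, (y : ℂ), 0;
     (starRingEnd ℂ) c, 0, 0, (b : ℂ)]

/-- `σʸ ⊗ σʸ` in the ordered basis `|00⟩,|01⟩,|10⟩,|11⟩`. -/
def sigmaYY : Matrix (Fin 4) (Fin 4) ℂ :=
  !![0, 0, 0, -1;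
     0, 0, 1, 0;
     0, 1, 0, 0;
     -1, 0, 0, 0]

/-!
`ρ (σʸ⊗σʸ) ρ* (σʸ⊗σʸ)` is again an X-shaped matrix, i.e. block diagonal on
`span {|00⟩, |11⟩}` and `span {|01⟩, |10⟩}`. The first block has trace `2 (ab + |c|²)` and
determinant `(ab - |c|²)²`, so its eigenvalues are `(√(ab) ± |c|)²`; likewise the second block
gives `(√(xy) ± |z|)²`. Positivity (`|c| ≤ √(ab)`, `|z| ≤ √(xy)`) makes `√(ab) ± |c|`,
`√(xy) ± |z|` the nonnegative square roots, so they are the `λᵢ` up to order. Hence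
`λ₁ = max (√(ab) + |c|) (√(xy) + |z|)`, and `λ₁ - λ₂ - λ₃ - λ₄ = 2 λ₁ - ∑ λᵢ` equals
`2 max (|c| - √(xy)) (|z| - √(ab))`.
-/

lemma Polynomial.roots_finset_prod_X_sub_C {R ι : Type*} [CommRing R] [IsDomain R]
    (s : Finset ι) (f : ι → R) : (∏ i ∈ s, (X - C (f i))).roots = s.val.map f := by
  rw [roots_prod _ _ (Finset.prod_ne_zero_iff.mpr fun i _ => X_sub_C_ne_zero (f i))]
  simp

lemma Polynomial.X_sub_C_mul_X_sub_C {R : Type*} [CommRing R] (μ μ' : R) :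
    (X - C μ) * (X - C μ') = X ^ 2 - C (μ + μ') * X + C (μ * μ') := by
  simp only [map_add, map_mul]
  ring

lemma map_univ_eq_of_prod_X_sub_C_sq_eq {ι : Type*} [Fintype ι] {f g : ι → ℝ}
    (hf : ∀ i, 0 ≤ f i) (hg : ∀ i, 0 ≤ g i)
    (h : ∏ i, (X - C ((f i : ℂ) ^ 2)) = ∏ i, (X - C ((g i : ℂ) ^ 2))) :
    Finset.univ.val.map f = Finset.univ.val.map g := by
  have hroots := congrArg (fun p => (p.roots).map fun w : ℂ => √w.re) h
  simp only [roots_finset_prod_X_sub_C, Multiset.map_map] at hroots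
  have hsqrt : ∀ r : ℝ, 0 ≤ r → √((r : ℂ) ^ 2).re = r := fun r hr => by
    rw [← Complex.ofReal_pow, Complex.ofReal_re, Real.sqrt_sq hr]
  simpa [Function.comp_def, hsqrt _ (hf _), hsqrt _ (hg _)] using hroots

lemma isGreatest_range_of_antitone_of_map_univ_eq {α : Type*} [Preorder α] {n : ℕ}
    {f g : Fin (n + 1) → α} (hf : Antitone f)
    (h : Finset.univ.val.map f = Finset.univ.val.map g) : IsGreatest (Set.range g) (f 0) := by
  constructor
  · obtain ⟨j, -, hj⟩ := Multiset.mem_map.mp (h ▸ Multiset.mem_map_of_mem f (Finset.mem_univ 0))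
    exact ⟨j, hj⟩
  · rintro _ ⟨j, rfl⟩
    obtain ⟨i, -, hi⟩ := Multiset.mem_map.mp (h ▸ Multiset.mem_map_of_mem g (Finset.mem_univ j))
    exact hi ▸ hf (Fin.zero_le i)

lemma isGreatest_range_add_sub (s k t l : ℝ) (hk : 0 ≤ k) (hl : 0 ≤ l) :
    IsGreatest (Set.range ![s + k, s - k, t + l, t - l]) (max (s + k) (t + l)) := by
  constructor
  · rcases max_choice (s + k) (t + l) with h | h
    · exact ⟨0, h.symm⟩
    · exact ⟨2, h.symm⟩
  · rintro _ ⟨j, rfl⟩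
    have := le_max_left (s + k) (t + l)
    have := le_max_right (s + k) (t + l)
    fin_cases j <;> dsimp <;> linarith

lemma Matrix.charpoly_X_shape {R : Type*} [CommRing R] (p q r s u v w t : R) :
    (!![p, 0, 0, q;
        0, u, v, 0;
        0, w, t, 0;
        r, 0, 0, s]).charpoly =
      (X ^ 2 - C (p + s) * X + C (p * s - q * r)) *
        (X ^ 2 - C (u + t) * X + C (u * t - v * w)) := by
  simp [Matrix.charpoly, Matrix.det_succ_row_zero, Fin.sum_univ_succ, Matrix.charmatrix_apply,
    Fin.succAbove]
  ring

lemma Matrix.charpoly_X_shape_eq_prod {R : Type*} [CommRing R] (p q r s u v w t : R)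
    (μ : Fin 4 → R)
    (h₀₁ : μ 0 + μ 1 = p + s) (h₀₁' : μ 0 * μ 1 = p * s - q * r)
    (h₂₃ : μ 2 + μ 3 = u + t) (h₂₃' : μ 2 * μ 3 = u * t - v * w) :
    (!![p, 0, 0, q;
        0, u, v, 0;
        0, w, t, 0;
        r, 0, 0, s]).charpoly = ∏ i, (X - C (μ i)) := by
  rw [charpoly_X_shape, Fin.prod_univ_four, mul_assoc, X_sub_C_mul_X_sub_C, X_sub_C_mul_X_sub_C,
    h₀₁, h₀₁', h₂₃, h₂₃']

lemma Xrho_mul_sigmaYY_mul_map_star_mul_sigmaYY (a b x y : ℝ) (c z : ℂ) :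
    Xrho a b x y c z * sigmaYY * (Xrho a b x y c z).map star * sigmaYY =
      !![a * b + c * starRingEnd ℂ c, 0, 0, 2 * a * c;
         0, x * y + z * starRingEnd ℂ z, 2 * x * z, 0;
         0, 2 * y * starRingEnd ℂ z, x * y + z * starRingEnd ℂ z, 0;
         2 * b * starRingEnd ℂ c, 0, 0, a * b + c * starRingEnd ℂ c] := by
  ext i j
  simp only [Matrix.mul_apply, Fin.sum_univ_four]
  fin_cases i <;> fin_cases j <;> simp [Xrho, sigmaYY] <;> ring

lemma charpoly_Xrho_mul_sigmaYY_mul_map_star_mul_sigmaYY (a b x y : ℝ) (c z : ℂ)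
    (hab : 0 ≤ a * b) (hxy : 0 ≤ x * y) :
    (Xrho a b x y c z * sigmaYY * (Xrho a b x y c z).map star * sigmaYY).charpoly =
      ∏ i, (X - C
        ((![√(a * b) + ‖c‖, √(a * b) - ‖c‖, √(x * y) + ‖z‖, √(x * y) - ‖z‖] i : ℂ) ^ 2)) := by
  have hs : ((√(a * b) : ℝ) : ℂ) ^ 2 = a * b := by
    rw [← Complex.ofReal_pow, Real.sq_sqrt hab, Complex.ofReal_mul]
  have ht : ((√(x * y) : ℝ) : ℂ) ^ 2 = x * y := by
    rw [← Complex.ofReal_pow, Real.sq_sqrt hxy, Complex.ofReal_mul]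
  have hc := Complex.mul_conj' c
  have hz := Complex.mul_conj' z
  rw [Xrho_mul_sigmaYY_mul_map_star_mul_sigmaYY]
  apply charpoly_X_shape_eq_prod <;> push_cast
  · linear_combination 2 * hs - 2 * hc
  · linear_combination
      (((√(a * b) : ℝ) : ℂ) ^ 2 - ((‖c‖ : ℝ) : ℂ) ^ 2 + a * b - c * starRingEnd ℂ c) * (hs + hc)
  · linear_combination 2 * ht - 2 * hz
  · linear_combination
      (((√(x * y) : ℝ) : ℂ) ^ 2 - ((‖z‖ : ℝ) : ℂ) ^ 2 + x * y - z * starRingEnd ℂ z) * (ht + hz)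

theorem concurrence_X_form_general (a b x y : ℝ) (c z : ℂ)
    (hc : Complex.normSq c ≤ a * b) (hz : Complex.normSq z ≤ x * y)
    (lam : Fin 4 → ℝ) (hmono : Antitone lam) (hnn : ∀ i, 0 ≤ lam i)
    (hchar : (Xrho a b x y c z * sigmaYY * (Xrho a b x y c z).map star * sigmaYY).charpoly
      = ∏ i, (X - C ((lam i : ℂ) ^ 2))) :
    max 0 (lam 0 - lam 1 - lam 2 - lam 3)
      = 2 * max 0 (max (‖c‖ - Real.sqrt (x * y))
                       (‖z‖ - Real.sqrt (a * b))) := by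
  have hab : 0 ≤ a * b := (Complex.normSq_nonneg c).trans hc
  have hxy : 0 ≤ x * y := (Complex.normSq_nonneg z).trans hz
  have hcs : ‖c‖ ≤ √(a * b) := by rw [Complex.norm_def]; exact Real.sqrt_le_sqrt hc
  have hzs : ‖z‖ ≤ √(x * y) := by rw [Complex.norm_def]; exact Real.sqrt_le_sqrt hz
  have hspec : Finset.univ.val.map lam = Finset.univ.val.map
      ![√(a * b) + ‖c‖, √(a * b) - ‖c‖, √(x * y) + ‖z‖, √(x * y) - ‖z‖] := by
    refine map_univ_eq_of_prod_X_sub_C_sq_eq hnn ?_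
      (hchar.symm.trans (charpoly_Xrho_mul_sigmaYY_mul_map_star_mul_sigmaYY a b x y c z hab hxy))
    intro i
    fin_cases i <;> dsimp <;> linarith [norm_nonneg c, norm_nonneg z]
  have hsum : lam 0 + lam 1 + lam 2 + lam 3 = 2 * √(a * b) + 2 * √(x * y) := by
    rw [← Fin.sum_univ_four, Finset.sum_eq_multiset_sum, hspec, ← Finset.sum_eq_multiset_sum,
      Fin.sum_univ_four]
    dsimp
    ring
  have htop : lam 0 = max (√(a * b) + ‖c‖) (√(x * y) + ‖z‖) :=
    (isGreatest_range_of_antitone_of_map_univ_eq hmono hspec).unique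
      (isGreatest_range_add_sub _ _ _ _ (norm_nonneg c) (norm_nonneg z))
  have hgap : lam 0 - lam 1 - lam 2 - lam 3 = 2 * max (‖c‖ - √(x * y)) (‖z‖ - √(a * b)) := by
    have hmax : max (‖c‖ - √(x * y)) (‖z‖ - √(a * b))
        = max (√(a * b) + ‖c‖) (√(x * y) + ‖z‖) - (√(a * b) + √(x * y)) := by
      rw [← max_sub_sub_right]
      congr 1 <;> ring
    linarith
  rw [hgap, mul_max_of_nonneg 0 _ zero_le_two, mul_zero]

/-- **Wootters' concurrence of an X-form state.** For a two-qubit density matrix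
`ρ = [[a,0,0,c],[0,x,z,0],[0,z*,y,0],[c*,0,0,b]]` (positive semidefinite with
trace 1), if `λ₁ ≥ λ₂ ≥ λ₃ ≥ λ₄ ≥ 0` are the square roots of the eigenvalues of
`ρ (σʸ⊗σʸ) ρ* (σʸ⊗σʸ)`, then the Wootters concurrence
`C = max {0, λ₁−λ₂−λ₃−λ₄}` equals `2 max {0, |c| − √(xy), |z| − √(ab)}`. -/
theorem concurrence_X_form (a b x y : ℝ) (c z : ℂ)
    (ha : 0 ≤ a) (hb : 0 ≤ b) (hx : 0 ≤ x) (hy : 0 ≤ y)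
    (htr : a + b + x + y = 1)
    (hc : Complex.normSq c ≤ a * b) (hz : Complex.normSq z ≤ x * y)
    (lam : Fin 4 → ℝ) (hmono : Antitone lam) (hnn : ∀ i, 0 ≤ lam i)
    (hchar : (Xrho a b x y c z * sigmaYY * (Xrho a b x y c z).map star * sigmaYY).charpoly
      = ∏ i, (X - C ((lam i : ℂ) ^ 2))) :
    max 0 (lam 0 - lam 1 - lam 2 - lam 3)
      = 2 * max 0 (max (‖c‖ - Real.sqrt (x * y))
                       (‖z‖ - Real.sqrt (a * b))) :=
  concurrence_X_form_general a b x y c z hc hz lam hmono hnn hchar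
end

section
/- The two-spin reduced density matrix of the ideal Fermi gas, ρ₁₂ = (1/(4−2f²)) · [[1−f², 0, 0, 0],[0, 1, −f², 0],[0, −f², 1, 0],[0, 0, 0, 1−f²]] with real parameter f, 0 ≤ f ≤ 1, has non-positive partial transpose (equivalently is entangled by the Peres–Horodecki criterion, equivalently has positive Wootters concurrence) if and only if f² > 1/2. -/
open Matrix
open scoped ComplexOrder

/-- The two-spin reduced density matrix of the ideal Fermi gas, in the basis
`|↑↑⟩, |↑↓⟩, |↓↑⟩, |↓↓⟩` (indexed by `Fin 2 × Fin 2`):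
`ρ₁₂ = (1/(4−2f²)) [[1−f²,0,0,0],[0,1,−f²,0],[0,−f²,1,0],[0,0,0,1−f²]]`. -/
noncomputable def fermiRho (f : ℝ) : Matrix (Fin 2 × Fin 2) (Fin 2 × Fin 2) ℂ :=
  Matrix.of fun p q =>
    (((4 - 2 * f ^ 2)⁻¹ : ℝ) : ℂ) *
      (if p = q then (if p.1 = p.2 then ((1 - f ^ 2 : ℝ) : ℂ) else 1)
       else if p.1 ≠ p.2 ∧ q.1 ≠ q.2 then ((-(f ^ 2) : ℝ) : ℂ) else 0)

/-- The partial transpose over the second qubit. -/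
noncomputable def partialTranspose (ρ : Matrix (Fin 2 × Fin 2) (Fin 2 × Fin 2) ℂ) :
    Matrix (Fin 2 × Fin 2) (Fin 2 × Fin 2) ℂ :=
  Matrix.of fun p q => ρ (p.1, q.2) (q.1, p.2)

/-!
Taking the partial transpose moves the coherence `-f²` from the `↑↓/↓↑` block to the
`↑↑/↓↓` corners, so the partial transpose is a positive multiple of the X-shaped matrix
`xMatrix a b z` with diagonal `(a, b, b, a) = (1 - f², 1, 1, 1 - f²)` and corner entries
`z = -f²`. Such a matrix is positive semidefinite iff `0 ≤ b` and `|z| ≤ a` (the outer `2 × 2`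
block has eigenvalues `a ± z`), i.e. here iff `f² ≤ 1 - f²`.
-/

theorem Matrix.posSemidef_smul_iff {n 𝕜 : Type*} [Fintype n] [RCLike 𝕜] {A : Matrix n n 𝕜}
    {c : ℝ} (hc : 0 < c) : (c • A).PosSemidef ↔ A.PosSemidef :=
  ⟨fun h => by simpa [smul_smul, hc.ne'] using h.smul (inv_nonneg.2 hc.le),
    fun h => h.smul hc.le⟩

noncomputable def xMatrix (a b z : ℝ) : Matrix (Fin 2 × Fin 2) (Fin 2 × Fin 2) ℂ :=
  Matrix.of fun p q =>
    if p = q then (if p.1 = p.2 then (a : ℂ) else b)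
    else if p.1 = p.2 ∧ q.1 = q.2 then (z : ℂ) else 0

lemma partialTranspose_fermiRho (f : ℝ) :
    partialTranspose (fermiRho f) = (4 - 2 * f ^ 2)⁻¹ • xMatrix (1 - f ^ 2) 1 (-f ^ 2) := by
  ext ⟨p1, p2⟩ ⟨q1, q2⟩
  fin_cases p1 <;> fin_cases p2 <;> fin_cases q1 <;> fin_cases q2 <;>
    simp [partialTranspose, fermiRho, xMatrix, Complex.real_smul]

lemma xMatrix_isHermitian (a b z : ℝ) : (xMatrix a b z).IsHermitian := by
  ext ⟨p1, p2⟩ ⟨q1, q2⟩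
  fin_cases p1 <;> fin_cases p2 <;> fin_cases q1 <;> fin_cases q2 <;> simp [xMatrix]

lemma star_dotProduct_xMatrix_mulVec (a b z : ℝ) (x : Fin 2 × Fin 2 → ℂ) :
    star x ⬝ᵥ xMatrix a b z *ᵥ x =
      ((a * (Complex.normSq (x (0, 0)) + Complex.normSq (x (1, 1))) +
        z * (2 * (x (0, 0) * starRingEnd ℂ (x (1, 1))).re) +
        b * (Complex.normSq (x (0, 1)) + Complex.normSq (x (1, 0))) : ℝ) : ℂ) := by
  simp only [dotProduct, mulVec, Fintype.sum_prod_type, Fin.sum_univ_two, xMatrix, of_apply,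
    Pi.star_apply]
  simp only [Prod.mk.injEq, Fin.isValue, zero_ne_one, one_ne_zero, and_self, and_false,
    and_true, if_true, if_false, zero_mul, add_zero, zero_add]
  push_cast
  simp only [Complex.re_eq_add_conj, ← Complex.mul_conj, map_mul, Complex.conj_conj,
    RCLike.star_def]
  ring

lemma xMatrix_posSemidef_iff (a b z : ℝ) :
    (xMatrix a b z).PosSemidef ↔ 0 ≤ b ∧ |z| ≤ a := by
  simp only [posSemidef_iff_dotProduct_mulVec, xMatrix_isHermitian, true_and,
    star_dotProduct_xMatrix_mulVec, Complex.zero_le_real]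
  constructor
  · intro h
    have hb : 0 ≤ b := by simpa using h (Pi.single (0, 1) 1)
    have hplus : 0 ≤ a * 2 + z * 2 := by
      simpa [one_add_one_eq_two] using h (fun p => if p.1 = p.2 then 1 else 0)
    have hminus : z * 2 ≤ a * 2 := by
      simpa [one_add_one_eq_two] using
        h (fun p => if p = (0, 0) then 1 else if p = (1, 1) then -1 else 0)
    exact ⟨hb, abs_le.2 ⟨by linarith, by linarith⟩⟩
  · rintro ⟨hb, hz⟩ x
    set u := x (0, 0)
    set v := x (1, 1)
    have hadd : 0 ≤ Complex.normSq u + Complex.normSq v + 2 * (u * starRingEnd ℂ v).re :=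
      Complex.normSq_add u v ▸ Complex.normSq_nonneg _
    have hsub : 0 ≤ Complex.normSq u + Complex.normSq v - 2 * (u * starRingEnd ℂ v).re :=
      Complex.normSq_sub u v ▸ Complex.normSq_nonneg _
    have hcoh : 0 ≤ |z| * (Complex.normSq u + Complex.normSq v) +
        z * (2 * (u * starRingEnd ℂ v).re) := by
      rcases abs_cases z with ⟨habs, _⟩ | ⟨habs, _⟩ <;> rw [habs] <;> nlinarith
    nlinarith [Complex.normSq_nonneg u, Complex.normSq_nonneg v,
      Complex.normSq_nonneg (x (0, 1)), Complex.normSq_nonneg (x (1, 0))]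

/-- The two-spin reduced density matrix `ρ₁₂` of the ideal Fermi gas with parameter
`0 ≤ f ≤ 1` has non-positive partial transpose — equivalently, is entangled by the
Peres–Horodecki criterion — if and only if `f² > 1/2`. -/
theorem fermi_gas_entangled_iff (f : ℝ) (hf0 : 0 ≤ f) (hf1 : f ≤ 1) :
    ¬ (partialTranspose (fermiRho f)).PosSemidef ↔ 1 / 2 < f ^ 2 := by
  have hscale : 0 < (4 - 2 * f ^ 2)⁻¹ := inv_pos.2 (by nlinarith)
  rw [partialTranspose_fermiRho, posSemidef_smul_iff hscale, xMatrix_posSemidef_iff,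
    abs_neg, abs_of_nonneg (sq_nonneg f)]
  simp only [zero_le_one, true_and, not_le]
  constructor <;> intro h <;> linarith
end
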